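/- A linear code C ⊆ F_3^n is m-trifferent if and only if it is m-minimal, i.e., every three distinct codewords of C triffer in at least m coordinates if and only if after deleting any m−1 coordinates, all codewords of C remain distinct and the resulting code is minimal. -/

import Mathlib

/-- Three words in `F_3^n` triffer at position `i` if their `i`-th coordinates are
the three distinct elements of `F_3`. -/
def TriffersZ {n : ℕ} (a b c : Fin n → ZMod 3) (i : Fin n) : Prop :=
  ({a i, b i, c i} : Finset (ZMod 3)) = Finset.univ

instance {n : ℕ} (a b c : Fin n → ZMod 3) (i : Fin n) : Decidable (TriffersZ a b c i) := by
  unfold TriffersZ; infer_instance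

/-- A set of words is `m`-trifferent if every three distinct elements triffer in
at least `m` positions. -/
def IsTrifferentSet {n : ℕ} (m : ℕ) (S : Set (Fin n → ZMod 3)) : Prop :=
  ∀ x ∈ S, ∀ y ∈ S, ∀ z ∈ S, x ≠ y → x ≠ z → y ≠ z →
    m ≤ (Finset.univ.filter fun i => TriffersZ x y z i).card

/-- A linear code is `m`-minimal if after deleting any `m - 1` coordinates all
codewords remain distinct, and the remaining code is minimal: for any two
codewords whose restrictions are linearly independent, the restricted support of
the first is not contained in that of the second. -/
def IsMMinimal {n : ℕ} (m : ℕ) (C : Submodule (ZMod 3) (Fin n → ZMod 3)) : Prop :=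
  ∀ D : Finset (Fin n), D.card = m - 1 →
    (∀ x ∈ C, ∀ y ∈ C, (∀ i ∉ D, x i = y i) → x = y) ∧
    (∀ x ∈ C, ∀ y ∈ C,
      (∀ a b : ZMod 3, (∀ i ∉ D, a * x i + b * y i = 0) → a = 0 ∧ b = 0) →
      ¬ (Finset.univ.filter fun i => i ∉ D ∧ x i ≠ 0) ⊆
        (Finset.univ.filter fun i => i ∉ D ∧ y i ≠ 0))

/-!
Translating by `-z`, three codewords `x, y, z` triffer exactly where `0, u = x - z, v = y - z`
do, and over `F_3` this happens at `i` iff `u i ≠ 0` and `v i = -u i`. So a linear code is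
`m`-trifferent iff every pair of distinct nonzero codewords `u, v` has at least `m` such positions.

If that holds and `#D < m`, two codewords agreeing off `D` are equal (take `u = x - y`, `v = -u`,
which triffer on the support of `u`); and if `x, y` are independent off `D` with the support of
`x` inside that of `y` off `D`, then `x` and `y - x` triffer only inside `D`. Conversely, if `u, v`
triffer at fewer than `m` positions, put these in a set `D` of size `m - 1`: off `D`, the support
of `u` lies in that of `u + v`. If `u + v = 0` this forces `u` to vanish off `D`; otherwise `u` and
`u + v` are independent in `F_3^n`, and stay independent off `D` by injectivity, contradicting
minimality.
-/

open Finset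

namespace ZMod

variable {M : Type*} [AddCommGroup M] [Module (ZMod 3) M]

theorem three_eq_zero_of_eq_neg {u : M} (h : u = -u) : u = 0 := by
  have h1 : (1 : ZMod 3) = -(1 + 1) := by decide
  calc u = (1 : ZMod 3) • u := (one_smul _ _).symm
    _ = -(u + -u) := by rw [h1, neg_smul, add_smul, one_smul, ← h]
    _ = 0 := by simp

theorem three_linearIndependent_pair {u v : M} (hu : u ≠ 0) (hv : v ≠ 0) (huv : u ≠ v)
    (hneg : u + v ≠ 0) : LinearIndependent (ZMod 3) ![u, v] := by
  rw [LinearIndependent.pair_iff' hu]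
  intro a
  obtain rfl | rfl | rfl : a = 0 ∨ a = 1 ∨ a = -1 := by revert a; decide
  · simpa using hv.symm
  · simpa using huv
  · rw [neg_smul, one_smul]
    exact fun h => hneg (by rw [← h, add_neg_cancel])

theorem three_finset_eq_univ_iff (a b c : ZMod 3) :
    ({a, b, c} : Finset (ZMod 3)) = univ ↔ a - c ≠ 0 ∧ a - c + (b - c) = 0 := by
  revert a b c; decide

end ZMod

variable {n m : ℕ}

/-- The positions where `u`, `v` and `0` triffer. -/
def trifferSet (u v : Fin n → ZMod 3) : Finset (Fin n) :=
  univ.filter fun i => u i ≠ 0 ∧ u i + v i = 0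

theorem filter_triffersZ_eq_trifferSet (x y z : Fin n → ZMod 3) :
    univ.filter (fun i => TriffersZ x y z i) = trifferSet (x - z) (y - z) := by
  ext i
  simp [trifferSet, TriffersZ, ZMod.three_finset_eq_univ_iff]

def IsTrifferentAtZero (m : ℕ) (C : Submodule (ZMod 3) (Fin n → ZMod 3)) : Prop :=
  ∀ u ∈ C, ∀ v ∈ C, u ≠ 0 → v ≠ 0 → u ≠ v → m ≤ #(trifferSet u v)

theorem isTrifferentSet_iff_isTrifferentAtZero (C : Submodule (ZMod 3) (Fin n → ZMod 3)) :
    IsTrifferentSet m (C : Set (Fin n → ZMod 3)) ↔ IsTrifferentAtZero m C := by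
  refine ⟨fun hT u hu v hv hu0 hv0 huv => ?_, fun hT x hx y hy z hz hxy hxz hyz => ?_⟩
  · simpa [filter_triffersZ_eq_trifferSet] using hT u hu v hv 0 C.zero_mem huv hu0 hv0
  · rw [filter_triffersZ_eq_trifferSet]
    exact hT _ (sub_mem hx hz) _ (sub_mem hy hz) (sub_ne_zero.2 hxz) (sub_ne_zero.2 hyz)
      fun h => hxy (sub_left_injective h)

namespace IsTrifferentAtZero

variable {C : Submodule (ZMod 3) (Fin n → ZMod 3)} {D : Finset (Fin n)}

theorem eq_of_eqOn_compl (hT : IsTrifferentAtZero m C) (hD : #D < m)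
    {x y : Fin n → ZMod 3} (hx : x ∈ C) (hy : y ∈ C) (hxy : ∀ i ∉ D, x i = y i) : x = y := by
  by_contra hne
  have hu : x - y ≠ 0 := sub_ne_zero.2 hne
  have hsub : trifferSet (x - y) (-(x - y)) ⊆ D := by
    intro i hi
    by_contra hiD
    simp [trifferSet, hxy i hiD] at hi
  have := (hT _ (sub_mem hx hy) _ (neg_mem (sub_mem hx hy)) hu (neg_ne_zero.2 hu)
    fun h => hu (ZMod.three_eq_zero_of_eq_neg h)).trans (card_le_card hsub)
  omega

theorem not_support_subset (hT : IsTrifferentAtZero m C) (hD : #D < m)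
    {x y : Fin n → ZMod 3} (hx : x ∈ C) (hy : y ∈ C)
    (hind : ∀ a b : ZMod 3, (∀ i ∉ D, a * x i + b * y i = 0) → a = 0 ∧ b = 0) :
    ¬ (univ.filter fun i => i ∉ D ∧ x i ≠ 0) ⊆ univ.filter fun i => i ∉ D ∧ y i ≠ 0 := by
  intro hsupp
  have hli : LinearIndependent (ZMod 3) ![x, y] :=
    LinearIndependent.pair_iff.2 fun a b h => hind a b fun i _ => by simpa using congrFun h i
  have hx0 : x ≠ 0 := by simpa using hli.ne_zero 0
  have hyx : y - x ≠ 0 :=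
    sub_ne_zero.2 (by simpa using ((LinearIndependent.pair_iff' hx0).1 hli 1).symm)
  have hxyx : x ≠ y - x := fun h => (LinearIndependent.pair_iff' hx0).1 hli 2 <| by
    rw [eq_sub_iff_add_eq] at h
    rw [← h, two_smul]
  have hsub : trifferSet x (y - x) ⊆ D := by
    intro i hi
    by_contra hiD
    simp only [trifferSet, mem_filter, mem_univ, true_and, Pi.sub_apply, add_sub_cancel] at hi
    simpa [hiD, hi.1, hi.2] using @hsupp i
  have := (hT x hx _ (sub_mem hy hx) hx0 hyx hxyx).trans (card_le_card hsub)
  omega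

end IsTrifferentAtZero

theorem IsMMinimal.isTrifferentAtZero {C : Submodule (ZMod 3) (Fin n → ZMod 3)}
    (hM : IsMMinimal m C) (hmn : m - 1 ≤ n) : IsTrifferentAtZero m C := by
  intro u hu v hv hu0 hv0 huv
  by_contra! hlt
  obtain ⟨D, hTD, hD⟩ := exists_superset_card_eq (s := trifferSet u v) (n := m - 1)
    (by omega) (by simpa using hmn)
  obtain ⟨hinj, hmin⟩ := hM D hD
  have hoff : ∀ i ∉ D, u i ≠ 0 → u i + v i ≠ 0 := fun i hi hui hw =>
    hi (hTD (by simp [trifferSet, hui, hw]))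
  by_cases hw : u + v = 0
  · refine hu0 (hinj u hu 0 C.zero_mem fun i hi => ?_)
    by_contra hui
    exact hoff i hi hui (by simpa using congrFun hw i)
  refine hmin u hu (u + v) (add_mem hu hv) (fun a b hab => ?_) fun i => ?_
  · have hcomb : a • u + b • (u + v) = 0 :=
      hinj _ (add_mem (C.smul_mem a hu) (C.smul_mem b (add_mem hu hv))) 0 C.zero_mem
        fun i hi => by simpa [mul_add] using hab i hi
    obtain ⟨hab0, hb0⟩ := LinearIndependent.pair_iff.1
      (ZMod.three_linearIndependent_pair hu0 hv0 huv hw) (a + b) b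
      (by rw [← hcomb]; module)
    exact ⟨by linear_combination hab0 - hb0, hb0⟩
  · simp only [mem_filter, mem_univ, true_and, Pi.add_apply]
    exact fun ⟨hi, hui⟩ => ⟨hi, hoff i hi hui⟩

theorem stmt14 (n m : ℕ) (hm : 1 ≤ m) (hmn : m ≤ n)
    (C : Submodule (ZMod 3) (Fin n → ZMod 3)) :
    IsTrifferentSet m (C : Set (Fin n → ZMod 3)) ↔ IsMMinimal m C := by
  rw [isTrifferentSet_iff_isTrifferentAtZero]
  refine ⟨fun hT D hD => ⟨?_, ?_⟩, fun hM => hM.isTrifferentAtZero (by omega)⟩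
  · exact fun x hx y hy => hT.eq_of_eqOn_compl (by omega) hx hy
  · exact fun x hx y hy => hT.not_support_subset (by omega) hx hy
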